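/- arXiv:1712.00380 — 3 statements merged into one kernel-verified Lean document; each statement's English description precedes it below -/
import Mathlib

section
/- For every δ > 0 and all x, y, y₀ ∈ ℝ, the Gaussian satisfies e^{−(x−y)²/δ} = Σ_{n=0}^{∞} (1/n!) ((y−y₀)/√δ)^n h_n((x−y₀)/√δ), the series on the right being absolutely convergent. -/
/-!
The function `z ↦ exp (-z²)` is entire, so its Taylor series at any real `u` converges to it
absolutely on all of `ℂ`. The real derivatives of its restriction to `ℝ` are the real parts of
the complex ones, so at the point `u - t` the `n`-th term is
`(-t)ⁿ/n! · (dⁿ/duⁿ) e^{-u²} = tⁿ hₙ(u)/n!`. Then take `u = (x - y₀)/√δ`, `t = (y - y₀)/√δ`.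
-/

/-- The Hermite functions `h_n(x) = (-1)^n (d/dx)^n e^{-x^2}`. -/
noncomputable def hermiteF (n : ℕ) (x : ℝ) : ℝ :=
  (-1 : ℝ) ^ n * iteratedDeriv n (fun t => Real.exp (-t ^ 2)) x

open Nat

namespace Complex

variable {f : ℂ → ℂ}

theorem summable_norm_taylorSeries_of_entire (hf : Differentiable ℂ f) (c z : ℂ) :
    Summable fun n : ℕ ↦ ‖(n ! : ℂ)⁻¹ • (z - c) ^ n • iteratedDeriv n f c‖ := by
  set a : ℂ → ℕ → ℂ := fun z n ↦ (n ! : ℂ)⁻¹ • (z - c) ^ n • iteratedDeriv n f c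
  have ha : ∀ n, a (c + 2 * (z - c)) n = 2 ^ n * a z n := fun n ↦ by
    simp only [a, smul_eq_mul, add_sub_cancel_left, mul_pow]; ring
  -- The Taylor series also converges at `c + 2 (z - c)`, so its terms there are bounded.
  obtain ⟨C, hC⟩ : BddAbove (Set.range fun n ↦ ‖a (c + 2 * (z - c)) n‖) :=
    (hasSum_taylorSeries_of_entire hf c _).summable.tendsto_atTop_zero.norm.bddAbove_range
  refine .of_nonneg_of_le (fun _ ↦ norm_nonneg _) (fun n ↦ ?_) (summable_geometric_two.mul_left C)
  have hn : 2 ^ n * ‖a z n‖ ≤ C := by simpa [ha] using hC ⟨n, rfl⟩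
  rw [one_div, inv_pow, ← div_eq_mul_inv, le_div_iff₀ (by positivity)]
  linarith

theorem iteratedDeriv_re_comp_ofReal (hf : Differentiable ℂ f) (n : ℕ) (x : ℝ) :
    iteratedDeriv n (fun t : ℝ ↦ (f t).re) x = (iteratedDeriv n f x).re := by
  induction n generalizing x with
  | zero => simp
  | succ n ih =>
    rw [iteratedDeriv_succ, iteratedDeriv_succ, funext ih]
    exact ((hf.contDiff (n := ⊤)).differentiable_iteratedDeriv n (WithTop.coe_lt_top _)
      x).hasDerivAt.real_of_complex.deriv

theorem re_taylorSeries_term (hf : Differentiable ℂ f) (c x : ℝ) (n : ℕ) :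
    ((n ! : ℂ)⁻¹ • ((x : ℂ) - c) ^ n • iteratedDeriv n f c).re =
      (n ! : ℝ)⁻¹ * (x - c) ^ n * iteratedDeriv n (fun t : ℝ ↦ (f t).re) c := by
  rw [iteratedDeriv_re_comp_ofReal hf, smul_eq_mul, smul_eq_mul, ← mul_assoc, ← ofReal_sub,
    ← ofReal_pow, ← ofReal_natCast, ← ofReal_inv, ← ofReal_mul, re_ofReal_mul]

theorem hasSum_re_taylorSeries_of_entire (hf : Differentiable ℂ f) (c x : ℝ) :
    HasSum (fun n : ℕ ↦ (n ! : ℝ)⁻¹ * (x - c) ^ n * iteratedDeriv n (fun t : ℝ ↦ (f t).re) c)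
      (f x).re := by
  simpa only [re_taylorSeries_term hf] using hasSum_re (hasSum_taylorSeries_of_entire hf c x)

theorem summable_abs_re_taylorSeries_of_entire (hf : Differentiable ℂ f) (c x : ℝ) :
    Summable fun n : ℕ ↦
      |(n ! : ℝ)⁻¹ * (x - c) ^ n * iteratedDeriv n (fun t : ℝ ↦ (f t).re) c| :=
  .of_nonneg_of_le (fun _ ↦ abs_nonneg _)
    (fun n ↦ re_taylorSeries_term hf c x n ▸ abs_re_le_norm _)
    (summable_norm_taylorSeries_of_entire hf c x)

end Complex

open Complex

theorem differentiable_cexp_neg_sq : Differentiable ℂ fun z : ℂ ↦ cexp (-z ^ 2) := by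
  fun_prop

theorem re_cexp_neg_sq (s : ℝ) : (cexp (-(s : ℂ) ^ 2)).re = Real.exp (-s ^ 2) := by
  rw [← ofReal_pow, ← ofReal_neg, exp_ofReal_re]

theorem hermiteF_series_term (u t : ℝ) (n : ℕ) :
    1 / (n ! : ℝ) * t ^ n * hermiteF n u =
      (n ! : ℝ)⁻¹ * ((u - t) - u) ^ n * iteratedDeriv n (fun s : ℝ ↦ (cexp (-s ^ 2)).re) u := by
  rw [funext re_cexp_neg_sq, hermiteF, sub_sub_cancel_left, neg_pow]
  ring

theorem hasSum_hermiteF (u t : ℝ) :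
    HasSum (fun n : ℕ ↦ 1 / (n ! : ℝ) * t ^ n * hermiteF n u) (Real.exp (-(u - t) ^ 2)) := by
  rw [funext (hermiteF_series_term u t), ← re_cexp_neg_sq]
  exact hasSum_re_taylorSeries_of_entire differentiable_cexp_neg_sq u (u - t)

theorem summable_abs_hermiteF (u t : ℝ) :
    Summable fun n : ℕ ↦ |1 / (n ! : ℝ) * t ^ n * hermiteF n u| := by
  simp only [hermiteF_series_term u t]
  exact summable_abs_re_taylorSeries_of_entire differentiable_cexp_neg_sq u (u - t)

/-- Hermite expansion of the 1D Gaussian about `y₀`, absolutely convergent. -/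
theorem gaussian_hermite_expansion_1d (δ : ℝ) (hδ : 0 < δ) (x y y₀ : ℝ) :
    (Summable fun n : ℕ =>
        |(1 / (n.factorial : ℝ)) * ((y - y₀) / Real.sqrt δ) ^ n *
          hermiteF n ((x - y₀) / Real.sqrt δ)|) ∧
    Real.exp (-(x - y) ^ 2 / δ) =
      ∑' n : ℕ, (1 / (n.factorial : ℝ)) * ((y - y₀) / Real.sqrt δ) ^ n *
        hermiteF n ((x - y₀) / Real.sqrt δ) := by
  refine ⟨summable_abs_hermiteF _ _, ?_⟩
  have hscale : -((x - y₀) / √δ - (y - y₀) / √δ) ^ 2 = -(x - y) ^ 2 / δ := by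
    rw [← sub_div, div_pow, Real.sq_sqrt hδ.le]
    ring
  rw [← hscale]
  exact (hasSum_hermiteF _ _).tsum_eq.symm
end

section
/- For every δ > 0 and all x, y, x₀ ∈ ℝ², the Gaussian satisfies e^{−‖x−y‖²/δ} = Σ_{α ∈ ℕ²} (1/α!) h_α((y−x₀)/√δ) ((x−x₀)/√δ)^α, the series (over all multi-indices α) being absolutely convergent. -/
/-- `ℝ²` with the Euclidean norm. -/
abbrev E2 : Type := EuclideanSpace ℝ (Fin 2)

/-- Two-dimensional Hermite functions `h_α(x₁,x₂) = h_{α₁}(x₁) h_{α₂}(x₂)`. -/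
noncomputable def hermite2 (α : ℕ × ℕ) (x : E2) : ℝ :=
  hermiteF α.1 (x 0) * hermiteF α.2 (x 1)

/-- Multi-index power `x^α = x₁^{α₁} x₂^{α₂}`. -/
noncomputable def mpow (x : E2) (α : ℕ × ℕ) : ℝ :=
  (x 0) ^ α.1 * (x 1) ^ α.2

/-- Multi-index factorial `α! = α₁!·α₂!` as a real number. -/
noncomputable def mfact (α : ℕ × ℕ) : ℝ :=
  (α.1.factorial : ℝ) * (α.2.factorial : ℝ)


open Real

noncomputable def Cg (v : ℝ) (n : ℕ) : ℝ :=
  ∑ k ∈ Finset.range (n + 1),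
    if 2 * k ≤ n then
      (2 * v) ^ (n - 2 * k) * (-1 : ℝ) ^ k / (((n - 2 * k).factorial : ℝ) * (k.factorial : ℝ))
    else 0

noncomputable def gg (u v : ℝ) (p : ℕ × ℕ) : ℝ :=
  if 2 * p.2 ≤ p.1 then
    (2 * v) ^ (p.1 - 2 * p.2) * (-1 : ℝ) ^ p.2 /
      (((p.1 - 2 * p.2).factorial : ℝ) * (p.2.factorial : ℝ)) * u ^ p.1
  else 0

lemma hasSum_exp_real (t : ℝ) : HasSum (fun n => t ^ n / (n.factorial : ℝ)) (Real.exp t) := by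
  have := NormedSpace.expSeries_div_hasSum_exp t
  rwa [← Real.exp_eq_exp_ℝ] at this

def iota : ℕ × ℕ → ℕ × ℕ := fun p => (p.1 + 2 * p.2, p.2)

lemma iota_inj : Function.Injective iota := by
  rintro ⟨m, k⟩ ⟨m', k'⟩ h
  simp only [iota, Prod.mk.injEq] at h
  obtain ⟨h1, h2⟩ := h
  subst h2
  exact Prod.ext (by omega) rfl

lemma gg_comp_iota (u v : ℝ) (p : ℕ × ℕ) :
    gg u v (iota p) = ((2 * v * u) ^ p.1 / (p.1.factorial : ℝ)) *
      ((-u ^ 2) ^ p.2 / (p.2.factorial : ℝ)) := by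
  obtain ⟨m, k⟩ := p
  simp only [gg, iota]
  simp only [show 2 * k ≤ m + 2 * k from by omega, ↓reduceIte]
  have h : m + 2 * k - 2 * k = m := by omega
  rw [h]
  rw [pow_add, pow_mul, mul_pow, neg_pow (u ^ 2) k]
  ring

lemma gg_off_range (u v : ℝ) (q : ℕ × ℕ) (hq : q ∉ Set.range iota) : gg u v q = 0 := by
  obtain ⟨n, k⟩ := q
  rw [gg, if_neg]
  intro h
  exact hq ⟨(n - 2 * k, k), Prod.ext (by simp [iota]; omega) rfl⟩

lemma summable_absT (u v : ℝ) :
    Summable (fun p : ℕ × ℕ => |((2 * v * u) ^ p.1 / (p.1.factorial : ℝ)) *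
      ((-u ^ 2) ^ p.2 / (p.2.factorial : ℝ))|) := by
  have h1 : Summable (fun n : ℕ => |2 * v * u| ^ n / (n.factorial : ℝ)) :=
    Real.summable_pow_div_factorial _
  have h2 : Summable (fun n : ℕ => (u ^ 2) ^ n / (n.factorial : ℝ)) :=
    Real.summable_pow_div_factorial _
  have := h1.mul_of_nonneg h2
    (fun n => by positivity) (fun n => by positivity)
  refine this.congr fun p => ?_
  simp [abs_mul, abs_div, abs_pow, abs_neg, sq_abs, Nat.abs_cast]

lemma hasSum_T (u v : ℝ) :
    HasSum (fun p : ℕ × ℕ => ((2 * v * u) ^ p.1 / (p.1.factorial : ℝ)) *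
      ((-u ^ 2) ^ p.2 / (p.2.factorial : ℝ)))
      (Real.exp (2 * v * u) * Real.exp (-u ^ 2)) := by
  have hs : Summable (fun p : ℕ × ℕ => ((2 * v * u) ^ p.1 / (p.1.factorial : ℝ)) *
      ((-u ^ 2) ^ p.2 / (p.2.factorial : ℝ))) := (summable_absT u v).of_abs
  have h := hs.hasSum
  have := (hasSum_exp_real (2 * v * u)).mul_eq (hasSum_exp_real (-u ^ 2)) h
  rwa [← this] at h

lemma hasSum_gg (u v : ℝ) :
    HasSum (gg u v) (Real.exp (2 * v * u) * Real.exp (-u ^ 2)) := by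
  rw [← iota_inj.hasSum_iff (gg_off_range u v)]
  exact (hasSum_T u v).congr_fun fun p => (gg_comp_iota u v p)

lemma summable_abs_gg (u v : ℝ) : Summable (fun p => |gg u v p|) := by
  rw [← iota_inj.summable_iff (f := fun p => |gg u v p|)
    (fun q hq => by simp only [gg_off_range u v q hq, abs_zero])]
  exact (summable_absT u v).congr fun p => by
    simp only [Function.comp_apply, gg_comp_iota u v p]

lemma gg_fiber_zero (u v : ℝ) (n : ℕ) : ∀ k ∉ Finset.range (n + 1),
    gg u v (n, k) = 0 := by
  intro k hk
  rw [gg, if_neg]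
  simp only [Finset.mem_range] at hk
  omega

lemma hasSum_row (u v : ℝ) (n : ℕ) :
    HasSum (fun k => gg u v (n, k)) (Cg v n * u ^ n) := by
  have h : HasSum (fun k => gg u v (n, k))
      (∑ k ∈ Finset.range (n + 1), gg u v (n, k)) :=
    hasSum_sum_of_ne_finset_zero (gg_fiber_zero u v n)
  convert h using 1
  rw [Cg, Finset.sum_mul]
  refine Finset.sum_congr rfl fun k _ => ?_
  rw [gg]
  split <;> simp

lemma hasSum_Cg (u v : ℝ) :
    HasSum (fun n => Cg v n * u ^ n) (Real.exp (2 * v * u) * Real.exp (-u ^ 2)) :=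
  (hasSum_gg u v).prod_fiberwise (hasSum_row u v)

lemma summable_abs_Cg (u v : ℝ) : Summable (fun n => |Cg v n * u ^ n|) := by
  have hrow : ∀ n, HasSum (fun k => |gg u v (n, k)|)
      (∑ k ∈ Finset.range (n + 1), |gg u v (n, k)|) :=
    fun n => hasSum_sum_of_ne_finset_zero fun k hk => by
      rw [gg_fiber_zero u v n k hk, abs_zero]
  have hD : Summable (fun n => ∑ k ∈ Finset.range (n + 1), |gg u v (n, k)|) :=
    ((summable_abs_gg u v).hasSum.prod_fiberwise hrow).summable
  refine Summable.of_nonneg_of_le (fun n => abs_nonneg _) (fun n => ?_) hD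
  have := (hasSum_row u v n).tsum_eq
  calc |Cg v n * u ^ n| = |∑ k ∈ Finset.range (n + 1), gg u v (n, k)| := by
        rw [← (hasSum_sum_of_ne_finset_zero (gg_fiber_zero u v n)).unique (hasSum_row u v n)]
    _ ≤ ∑ k ∈ Finset.range (n + 1), |gg u v (n, k)| := Finset.abs_sum_le_sum_abs _ _

noncomputable def coefG (v : ℝ) (n : ℕ) : ℝ := Real.exp (-v ^ 2) * Cg v n

lemma hasSum_coefG (u v : ℝ) :
    HasSum (fun n => coefG v n * u ^ n) (Real.exp (-(u - v) ^ 2)) := by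
  have h := (hasSum_Cg u v).mul_left (Real.exp (-v ^ 2))
  have hval : Real.exp (-v ^ 2) * (Real.exp (2 * v * u) * Real.exp (-u ^ 2)) =
      Real.exp (-(u - v) ^ 2) := by
    rw [← Real.exp_add, ← Real.exp_add]; ring_nf
  rw [hval] at h
  exact h.congr_fun fun n => by rw [coefG]; ring

lemma summable_abs_coefG (u v : ℝ) :
    Summable (fun n => |coefG v n * u ^ n|) := by
  have := (summable_abs_Cg u v).mul_left (Real.exp (-v ^ 2))
  refine this.congr fun n => ?_
  rw [coefG, abs_mul, abs_mul, abs_mul, abs_of_pos (Real.exp_pos _)]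
  ring

lemma hasFPower (v : ℝ) :
    HasFPowerSeriesOnBall (fun u => Real.exp (-(u - v) ^ 2))
      (FormalMultilinearSeries.ofScalars ℝ (coefG v)) 0 ⊤ := by
  constructor
  · rw [FormalMultilinearSeries.radius_eq_top_of_summable_norm]
    intro r
    have := summable_abs_coefG (r : ℝ) v
    refine this.congr fun n => ?_
    rw [FormalMultilinearSeries.ofScalars_norm, Real.norm_eq_abs, abs_mul, abs_pow,
      abs_of_nonneg (NNReal.coe_nonneg r)]
  · exact ENNReal.zero_lt_top
  · intro z hz
    simp only [FormalMultilinearSeries.ofScalars_apply_eq, smul_eq_mul, zero_add]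
    exact hasSum_coefG z v

lemma iteratedDeriv_gauss_shift (v : ℝ) (n : ℕ) :
    iteratedDeriv n (fun u => Real.exp (-(u - v) ^ 2)) 0 = hermiteF n v := by
  have h1 : iteratedDeriv n (fun x : ℝ => Real.exp (-(v + -x) ^ 2)) 0
      = (-1 : ℝ) ^ n • iteratedDeriv n (fun z => Real.exp (-(v + z) ^ 2)) (-0) :=
    by exact iteratedDeriv_comp_neg n (fun z : ℝ => Real.exp (-(v + z) ^ 2)) 0
  have hfun : (fun u : ℝ => Real.exp (-(u - v) ^ 2)) =
      fun x : ℝ => Real.exp (-(v + -x) ^ 2) := by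
    funext u; ring_nf
  rw [hfun, h1, neg_zero, hermiteF, smul_eq_mul]
  congr 1
  have h2 := congrFun (iteratedDeriv_comp_const_add n (fun t => Real.exp (-t ^ 2)) v) (0 : ℝ)
  simpa using h2

lemma hermiteF_eq_coefG (v : ℝ) (n : ℕ) :
    hermiteF n v = (n.factorial : ℝ) * coefG v n := by
  have h := (hasFPower v).factorial_smul (1 : ℝ) n
  rw [← iteratedDeriv_eq_iteratedFDeriv, iteratedDeriv_gauss_shift v n] at h
  rw [← h, FormalMultilinearSeries.ofScalars_apply_eq, one_pow, smul_eq_mul, mul_one,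
    nsmul_eq_mul]

lemma hermiteF_div (v : ℝ) (n : ℕ) :
    hermiteF n v / (n.factorial : ℝ) = coefG v n := by
  rw [hermiteF_eq_coefG, mul_comm, mul_div_assoc,
    div_self (by exact_mod_cast n.factorial_ne_zero), mul_one]

lemma oneD_hasSum (u v : ℝ) :
    HasSum (fun n => hermiteF n v / (n.factorial : ℝ) * u ^ n) (Real.exp (-(u - v) ^ 2)) :=
  (hasSum_coefG u v).congr_fun fun n => by rw [hermiteF_div]

lemma oneD_summable (u v : ℝ) :
    Summable (fun n => |hermiteF n v / (n.factorial : ℝ) * u ^ n|) :=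
  (summable_abs_coefG u v).congr fun n => by rw [hermiteF_div]


set_option maxHeartbeats 1000000

/-- Taylor expansion of the 2D Gaussian in the target variable about `x₀`,
absolutely convergent. -/
theorem gaussian_taylor_expansion_2d (δ : ℝ) (hδ : 0 < δ) (x y x₀ : E2) :
    (Summable fun α : ℕ × ℕ =>
        |(1 / mfact α) * hermite2 α ((Real.sqrt δ)⁻¹ • (y - x₀)) *
          mpow ((Real.sqrt δ)⁻¹ • (x - x₀)) α|) ∧
    Real.exp (-‖x - y‖ ^ 2 / δ) =
      ∑' α : ℕ × ℕ, (1 / mfact α) * hermite2 α ((Real.sqrt δ)⁻¹ • (y - x₀)) *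
        mpow ((Real.sqrt δ)⁻¹ • (x - x₀)) α := by
  set V : E2 := (Real.sqrt δ)⁻¹ • (y - x₀) with hV
  set U : E2 := (Real.sqrt δ)⁻¹ • (x - x₀) with hU
  have hsq : ∀ i : Fin 2, (U i - V i) ^ 2 = (x i - y i) ^ 2 / δ := by
    intro i
    have : U i - V i = (Real.sqrt δ)⁻¹ * (x i - y i) := by
      simp only [hU, hV, PiLp.smul_apply, PiLp.sub_apply, smul_eq_mul]
      ring
    rw [this, mul_pow, inv_pow, Real.sq_sqrt hδ.le]
    ring
  have hnorm : ‖x - y‖ ^ 2 = (x 0 - y 0) ^ 2 + (x 1 - y 1) ^ 2 := by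
    rw [EuclideanSpace.norm_eq, Real.sq_sqrt (by positivity)]
    simp [Fin.sum_univ_two, Real.norm_eq_abs, sq_abs, PiLp.sub_apply]
  have hexp : Real.exp (-‖x - y‖ ^ 2 / δ) =
      Real.exp (-(U 0 - V 0) ^ 2) * Real.exp (-(U 1 - V 1) ^ 2) := by
    rw [← Real.exp_add, hnorm, hsq 0, hsq 1]
    ring_nf
  have f0 := oneD_hasSum (U 0) (V 0)
  have f1 := oneD_hasSum (U 1) (V 1)
  have s0 := oneD_summable (U 0) (V 0)
  have s1 := oneD_summable (U 1) (V 1)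
  have hterm : ∀ α : ℕ × ℕ, (1 / mfact α) * hermite2 α V * mpow U α =
      (hermiteF α.1 (V 0) / (α.1.factorial : ℝ) * (U 0) ^ α.1) *
      (hermiteF α.2 (V 1) / (α.2.factorial : ℝ) * (U 1) ^ α.2) := by
    intro α
    rw [mfact, hermite2, mpow]
    field_simp
  have hpair_abs : Summable (fun α : ℕ × ℕ =>
      |hermiteF α.1 (V 0) / (α.1.factorial : ℝ) * (U 0) ^ α.1| *
      |hermiteF α.2 (V 1) / (α.2.factorial : ℝ) * (U 1) ^ α.2|) :=
    s0.mul_of_nonneg s1 (fun n => abs_nonneg _) (fun n => abs_nonneg _)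
  constructor
  · refine hpair_abs.congr fun α => ?_
    rw [← abs_mul, hterm α]
  · have hpair : Summable (fun α : ℕ × ℕ =>
        (hermiteF α.1 (V 0) / (α.1.factorial : ℝ) * (U 0) ^ α.1) *
        (hermiteF α.2 (V 1) / (α.2.factorial : ℝ) * (U 1) ^ α.2)) :=
      Summable.of_abs (hpair_abs.congr fun α => (abs_mul _ _).symm)
    have hval := f0.mul_eq f1 hpair.hasSum
    rw [hexp, hval]
    exact tsum_congr fun α => (hterm α).symm
end

section
/- (Poisson summation for Hermite lattice sums.) For every δ > 0 and every n ∈ ℕ, Σ_{j ∈ ℤ} h_n(j/√δ) = √(πδ) · (−2πi√δ)^n · Σ_{m ∈ ℤ} m^n e^{−π² m² δ}, both series converging absolutely and the equality holding in ℂ. Consequently, for every multi-index α = (α₁,α₂) ∈ ℕ², Σ_{(j₁,j₂) ∈ ℤ²} h_α((j₁,j₂)/√δ) = πδ · (−2πi√δ)^{α₁+α₂} · (Σ_{m ∈ ℤ} m^{α₁} e^{−π² m² δ}) · (Σ_{n ∈ ℤ} n^{α₂} e^{−π² n² δ}). -/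
open Real

open Complex MeasureTheory Filter Asymptotics Polynomial FourierTransform

noncomputable section

/-- recursion polynomial for derivatives of the gaussian -/
def hermP : ℕ → Polynomial ℝ
  | 0 => 1
  | n + 1 => (hermP n).derivative - Polynomial.C 2 * Polynomial.X * hermP n

lemma gauss_hasDerivAt (x : ℝ) :
    HasDerivAt (fun t : ℝ => rexp (-t ^ 2)) (-2 * x * rexp (-x ^ 2)) x := by
  have h : HasDerivAt (fun t : ℝ => -t ^ 2) (-(2 * x)) x := by
    simpa using (hasDerivAt_pow 2 x).fun_neg
  simpa [mul_comm] using h.exp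

lemma iteratedDeriv_gauss (n : ℕ) :
    iteratedDeriv n (fun t : ℝ => rexp (-t ^ 2)) =
      fun x => (hermP n).eval x * rexp (-x ^ 2) := by
  induction n with
  | zero => funext x; simp [hermP]
  | succ n ih =>
    rw [iteratedDeriv_succ, ih]
    funext x
    have h1 : HasDerivAt (fun x : ℝ => (hermP n).eval x * rexp (-x ^ 2))
        ((hermP n).derivative.eval x * rexp (-x ^ 2) +
          (hermP n).eval x * (-2 * x * rexp (-x ^ 2))) x :=
      ((hermP n).hasDerivAt x).mul (gauss_hasDerivAt x)
    rw [h1.deriv, hermP]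
    simp only [Polynomial.eval_sub, Polynomial.eval_mul, Polynomial.eval_ofNat,
      Polynomial.eval_X, Polynomial.eval_C]
    ring

lemma gauss_contDiff : ContDiff ℝ (⊤ : ℕ∞) (fun t : ℝ => rexp (-t ^ 2)) :=
  Real.contDiff_exp.comp ((contDiff_id.pow 2).neg)

lemma iteratedDeriv_ofReal {f : ℝ → ℝ} (hf : ContDiff ℝ (⊤ : ℕ∞) f) (n : ℕ) :
    iteratedDeriv n (fun x : ℝ => ((f x : ℝ) : ℂ)) = fun x => ((iteratedDeriv n f x : ℝ) : ℂ) := by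
  induction n with
  | zero => simp
  | succ n ih =>
    rw [iteratedDeriv_succ, ih, iteratedDeriv_succ]
    funext x
    have hd : HasDerivAt (iteratedDeriv n f) (deriv (iteratedDeriv n f) x) x :=
      ((hf.differentiable_iteratedDeriv n (by exact_mod_cast lt_top_iff_ne_top.2 (by simp))).differentiableAt).hasDerivAt
    exact hd.ofReal_comp.deriv


lemma mono_gauss_tendsto (k : ℕ) {b : ℝ} (hb : 0 < b) :
    Tendsto (fun x : ℝ => x ^ k * rexp (-b * x ^ 2)) (cocompact ℝ) (nhds 0) := by
  rw [tendsto_zero_iff_norm_tendsto_zero]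
  refine (tendsto_rpow_abs_mul_exp_neg_mul_sq_cocompact hb (k : ℝ)).congr fun x => ?_
  simp [abs_mul, abs_pow, abs_of_pos (Real.exp_pos _), Real.rpow_natCast]

lemma polyGauss_tendsto (p : Polynomial ℝ) {b : ℝ} (hb : 0 < b) :
    Tendsto (fun x : ℝ => p.eval x * rexp (-b * x ^ 2)) (cocompact ℝ) (nhds 0) := by
  have h : ∀ x : ℝ, ∑ i ∈ Finset.range (p.natDegree + 1),
      p.coeff i * (x ^ i * rexp (-b * x ^ 2)) = p.eval x * rexp (-b * x ^ 2) := by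
    intro x
    rw [Polynomial.eval_eq_sum_range, Finset.sum_mul]
    exact Finset.sum_congr rfl fun i _ => by ring
  have h2 := tendsto_finset_sum (Finset.range (p.natDegree + 1))
    (fun i _ => ((mono_gauss_tendsto i hb).const_mul (p.coeff i)))
  simpa using h2.congr h

lemma polyGauss_isBigO_exp (p : Polynomial ℝ) {b : ℝ} (hb : 0 < b) :
    (fun x : ℝ => p.eval x * rexp (-b * x ^ 2)) =O[cocompact ℝ]
      fun x : ℝ => rexp (-(b / 2) * x ^ 2) := by
  have h2 : 0 < b / 2 := half_pos hb
  refine IsBigO.of_bound 1 ?_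
  have hev := NormedAddCommGroup.tendsto_nhds_zero.mp (polyGauss_tendsto p h2) 1 one_pos
  filter_upwards [hev] with x hx
  have hsplit : rexp (-b * x ^ 2) = rexp (-(b / 2) * x ^ 2) * rexp (-(b / 2) * x ^ 2) := by
    rw [← Real.exp_add]; ring_nf
  have : ‖p.eval x * rexp (-b * x ^ 2)‖ =
      ‖p.eval x * rexp (-(b / 2) * x ^ 2)‖ * rexp (-(b / 2) * x ^ 2) := by
    rw [hsplit]
    simp [abs_mul, abs_of_pos (Real.exp_pos _), mul_assoc]
  rw [this]
  have h1 : ‖p.eval x * rexp (-(b / 2) * x ^ 2)‖ ≤ 1 := hx.le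
  calc ‖p.eval x * rexp (-(b / 2) * x ^ 2)‖ * rexp (-(b / 2) * x ^ 2)
      ≤ 1 * rexp (-(b / 2) * x ^ 2) := by
        exact mul_le_mul_of_nonneg_right h1 (Real.exp_pos _).le
    _ = 1 * ‖rexp (-(b / 2) * x ^ 2)‖ := by
        rw [Real.norm_eq_abs, abs_of_pos (Real.exp_pos _)]

lemma polyGauss_isBigO_rpow (p : Polynomial ℝ) {b : ℝ} (hb : 0 < b) :
    (fun x : ℝ => p.eval x * rexp (-b * x ^ 2)) =O[cocompact ℝ]
      fun x : ℝ => |x| ^ (-2 : ℝ) := by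
  refine (polyGauss_isBigO_exp p hb).trans ?_
  have h2 : (0 : ℝ) < b / 2 := half_pos hb
  have hc := (isLittleO_exp_neg_mul_sq_cocompact
    (a := ((b / 2 : ℝ) : ℂ)) (by simpa using h2) (-2)).isBigO
  refine hc.norm_left.congr_left fun x => ?_
  rw [← Complex.ofReal_pow]
  norm_cast
  rw [Real.norm_eq_abs]
  exact abs_of_pos (Real.exp_pos _)

lemma polyGauss_summable (p : Polynomial ℝ) {b : ℝ} (hb : 0 < b) :
    Summable fun j : ℤ => p.eval (j : ℝ) * rexp (-b * (j : ℝ) ^ 2) := by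
  refine summable_of_isBigO (Real.summable_abs_int_rpow one_lt_two) ?_
  have := (polyGauss_isBigO_rpow p hb).comp_tendsto Int.tendsto_coe_cofinite
  simpa [Function.comp_def] using this

lemma polyGauss_integrable (p : Polynomial ℝ) {b : ℝ} (hb : 0 < b) :
    Integrable fun x : ℝ => p.eval x * rexp (-b * x ^ 2) := by
  have hc : Continuous fun x : ℝ => p.eval x * rexp (-b * x ^ 2) :=
    p.continuous.mul (Real.continuous_exp.comp (by continuity))
  exact hc.locallyIntegrable.integrable_of_isBigO_cocompact (polyGauss_isBigO_exp p hb)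
    ((integrable_exp_neg_mul_sq (half_pos hb)).integrableAtFilter _)


lemma fourier_const_smul (f : ℝ → ℂ) (r : ℂ) (w : ℝ) :
    𝓕 (fun x : ℝ => r * f x) w = r * 𝓕 f w := by
  simp_rw [Real.fourier_real_eq_integral_exp_smul, smul_eq_mul]
  rw [← MeasureTheory.integral_const_mul]
  congr 1; funext v; ring

lemma fourier_comp_div (f : ℝ → ℂ) {c : ℝ} (hc : 0 < c) (ξ : ℝ) :
    𝓕 (fun x : ℝ => f (x / c)) ξ = (c : ℂ) * 𝓕 f (c * ξ) := by
  simp_rw [Real.fourier_real_eq_integral_exp_smul, smul_eq_mul]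
  have key := MeasureTheory.Measure.integral_comp_div
    (fun y : ℝ => Complex.exp (↑(-2 * π * (c * y) * ξ) * Complex.I) * f y) c
  have h1 : (∫ x : ℝ, Complex.exp (↑(-2 * π * x * ξ) * Complex.I) * f (x / c)) =
      ∫ x : ℝ, Complex.exp (↑(-2 * π * (c * (x / c)) * ξ) * Complex.I) * f (x / c) := by
    congr 1; funext x; rw [mul_div_cancel₀ _ hc.ne']
  rw [h1, key, abs_of_pos hc]
  rw [Complex.real_smul]
  congr 1
  congr 1; funext y; congr 2; push_cast; ring

lemma fourier_gauss :
    𝓕 (fun x : ℝ => ((rexp (-x ^ 2) : ℝ) : ℂ)) =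
      fun ξ : ℝ => (Real.sqrt π : ℂ) * ((rexp (-π ^ 2 * ξ ^ 2) : ℝ) : ℂ) := by
  have hπ : (0 : ℝ) < π := Real.pi_pos
  have hb : (0 : ℝ) < π⁻¹ := inv_pos.2 hπ
  have h := fourier_gaussian_pi (b := ((π⁻¹ : ℝ) : ℂ)) (by simpa using hb)
  have h0 : (fun x : ℝ => ((rexp (-x ^ 2) : ℝ) : ℂ)) =
      fun x : ℝ => Complex.exp (-(π : ℂ) * ((π⁻¹ : ℝ) : ℂ) * (x : ℂ) ^ 2) := by
    funext x
    rw [Complex.ofReal_exp]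
    congr 1
    have : -(π : ℂ) * ((π⁻¹ : ℝ) : ℂ) = -1 := by
      push_cast
      rw [neg_mul, mul_inv_cancel₀ (Complex.ofReal_ne_zero.mpr hπ.ne')]
    rw [this]; push_cast; ring
  rw [h0, h]
  funext ξ
  have hcpow : ((π⁻¹ : ℝ) : ℂ) ^ (1 / 2 : ℂ) = (((Real.sqrt π)⁻¹ : ℝ) : ℂ) := by
    rw [show ((1 : ℂ) / 2) = (((1 / 2 : ℝ)) : ℂ) by norm_num, ← Complex.ofReal_cpow hb.le]
    norm_cast
    rw [← Real.sqrt_eq_rpow, Real.sqrt_inv]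
  rw [hcpow]
  have harg : -(π : ℂ) / ((π⁻¹ : ℝ) : ℂ) * (ξ : ℂ) ^ 2 = (((-π ^ 2 * ξ ^ 2 : ℝ)) : ℂ) := by
    push_cast
    rw [div_eq_mul_inv, inv_inv]
    ring
  rw [harg, ← Complex.ofReal_exp]
  have : (1 : ℂ) / (((Real.sqrt π)⁻¹ : ℝ) : ℂ) = ((Real.sqrt π : ℝ) : ℂ) := by
    push_cast
    rw [one_div, inv_inv]
  rw [this]

lemma fourier_hermC (n : ℕ) :
    𝓕 (fun x : ℝ => ((hermiteF n x : ℝ) : ℂ)) =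
      fun ξ : ℝ => (-2 * (π : ℂ) * Complex.I * (ξ : ℂ)) ^ n *
        ((Real.sqrt π : ℂ) * ((rexp (-π ^ 2 * ξ ^ 2) : ℝ) : ℂ)) := by
  set G : ℝ → ℂ := fun x : ℝ => ((rexp (-x ^ 2) : ℝ) : ℂ) with hG
  have hGC : ContDiff ℝ (⊤ : ℕ∞) G :=
    (Complex.ofRealCLM.contDiff.of_le (mod_cast le_top)).comp (gauss_contDiff.of_le (mod_cast le_top))
  have hid : ∀ m : ℕ, iteratedDeriv m G =
      fun x : ℝ => (((hermP m).eval x * rexp (-x ^ 2) : ℝ) : ℂ) := by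
    intro m
    rw [hG, iteratedDeriv_ofReal gauss_contDiff, iteratedDeriv_gauss]
  have hint : ∀ m : ℕ, (m : ℕ∞) ≤ ⊤ → Integrable (iteratedDeriv m G) := by
    intro m _
    rw [hid m]
    have h1 : Integrable fun x : ℝ => (hermP m).eval x * rexp (-x ^ 2) := by
      simpa using polyGauss_integrable (hermP m) one_pos
    exact h1.ofReal
  have key := Real.fourier_iteratedDeriv (N := (⊤ : ℕ∞)) hGC hint ((mod_cast le_top)) (n := n)
  have hherm : (fun x : ℝ => ((hermiteF n x : ℝ) : ℂ)) =
      fun x => ((-1 : ℂ) ^ n) * iteratedDeriv n G x := by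
    funext x
    rw [hid n]
    simp only [hermiteF, iteratedDeriv_gauss]
    push_cast
    ring
  funext ξ
  rw [hherm, fourier_const_smul, key]
  rw [hG] at *
  rw [fourier_gauss]
  simp only [smul_eq_mul]
  have h2 : (-2 * (π : ℂ) * Complex.I * (ξ : ℂ)) ^ n =
      (-1 : ℂ) ^ n * (2 * (π : ℂ) * Complex.I * (ξ : ℂ)) ^ n := by
    rw [← mul_pow]; ring_nf
  rw [h2]
  ring

lemma fourier_hermC_div (n : ℕ) {c : ℝ} (hc : 0 < c) (ξ : ℝ) :
    𝓕 (fun x : ℝ => ((hermiteF n (x / c) : ℝ) : ℂ)) ξ =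
      ((c : ℂ) * (Real.sqrt π : ℂ) * (-2 * (π : ℂ) * Complex.I * (c : ℂ)) ^ n) *
        ((ξ : ℂ) ^ n * ((rexp (-(π ^ 2 * c ^ 2) * ξ ^ 2) : ℝ) : ℂ)) := by
  rw [fourier_comp_div (fun y : ℝ => ((hermiteF n y : ℝ) : ℂ)) hc ξ, fourier_hermC]
  simp only
  have harg : -π ^ 2 * (c * ξ) ^ 2 = -(π ^ 2 * c ^ 2) * ξ ^ 2 := by ring
  rw [harg]
  push_cast
  ring

lemma herm_summable (δ : ℝ) (hδ : 0 < δ) (n : ℕ) :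
    Summable fun j : ℤ => |hermiteF n ((j : ℝ) / Real.sqrt δ)| := by
  set c := Real.sqrt δ with hcdef
  have hc : 0 < c := Real.sqrt_pos.2 hδ
  have hc2 : c ^ 2 = δ := Real.sq_sqrt hδ.le
  set q : Polynomial ℝ :=
    Polynomial.C ((-1 : ℝ) ^ n) * ((hermP n).comp (Polynomial.C c⁻¹ * Polynomial.X)) with hq
  have hdiv : ∀ x : ℝ, hermiteF n (x / c) = q.eval x * rexp (-δ⁻¹ * x ^ 2) := by
    intro x
    have h1 : -(x / c) ^ 2 = -δ⁻¹ * x ^ 2 := by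
      rw [div_pow, hc2]; field_simp
    have h2 : c⁻¹ * x = x / c := inv_mul_eq_div c x
    simp only [hermiteF, iteratedDeriv_gauss]
    rw [hq]
    simp only [Polynomial.eval_mul, Polynomial.eval_C, Polynomial.eval_comp, Polynomial.eval_X]
    rw [h2, ← h1]
    ring
  refine summable_abs_iff.2 ?_
  exact (polyGauss_summable q (inv_pos.2 hδ)).congr fun j => (hdiv (j : ℝ)).symm

lemma gaussMoment_summable (δ : ℝ) (hδ : 0 < δ) (n : ℕ) :
    Summable fun m : ℤ => |(m : ℝ) ^ n * rexp (-π ^ 2 * (m : ℝ) ^ 2 * δ)| := by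
  have hb : (0 : ℝ) < π ^ 2 * δ := by positivity
  refine summable_abs_iff.2 ?_
  refine (polyGauss_summable (Polynomial.X ^ n) hb).congr fun j => ?_
  simp only [Polynomial.eval_pow, Polynomial.eval_X]
  congr 1
  congr 1
  ring

lemma oneD (δ : ℝ) (hδ : 0 < δ) (n : ℕ) :
    ((∑' j : ℤ, hermiteF n ((j : ℝ) / Real.sqrt δ) : ℝ) : ℂ) =
      (Real.sqrt (π * δ) : ℂ) * (-2 * (π : ℂ) * Complex.I * (Real.sqrt δ : ℂ)) ^ n *
        ∑' m : ℤ, (m : ℂ) ^ n * ((Real.exp (-π ^ 2 * (m : ℝ) ^ 2 * δ) : ℝ) : ℂ) := by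
  set c := Real.sqrt δ with hcdef
  have hc : 0 < c := Real.sqrt_pos.2 hδ
  have hc2 : c ^ 2 = δ := Real.sq_sqrt hδ.le
  set q : Polynomial ℝ :=
    Polynomial.C ((-1 : ℝ) ^ n) * ((hermP n).comp (Polynomial.C c⁻¹ * Polynomial.X)) with hq
  have hdiv : ∀ x : ℝ, hermiteF n (x / c) = q.eval x * rexp (-δ⁻¹ * x ^ 2) := by
    intro x
    have h1 : -(x / c) ^ 2 = -δ⁻¹ * x ^ 2 := by
      rw [div_pow, hc2]; field_simp
    have h2 : c⁻¹ * x = x / c := inv_mul_eq_div c x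
    simp only [hermiteF, iteratedDeriv_gauss]
    rw [hq]
    simp only [Polynomial.eval_mul, Polynomial.eval_C, Polynomial.eval_comp, Polynomial.eval_X]
    rw [h2, ← h1]
    ring
  have hbδ : (0 : ℝ) < δ⁻¹ := inv_pos.2 hδ
  set F : ℝ → ℂ := fun x : ℝ => ((hermiteF n (x / c) : ℝ) : ℂ) with hF
  have hFr : F = fun x : ℝ => ((q.eval x * rexp (-δ⁻¹ * x ^ 2) : ℝ) : ℂ) := by
    funext x; simp only [hF]; rw [hdiv x]
  have hCf : Continuous F := by
    rw [hFr]
    exact Complex.continuous_ofReal.comp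
      (q.continuous.mul (Real.continuous_exp.comp (by continuity)))
  have f_bd : F =O[cocompact ℝ] fun x : ℝ => |x| ^ (-2 : ℝ) := by
    rw [hFr]
    exact (Complex.ofRealCLM.isBigO_comp _ _).trans (polyGauss_isBigO_rpow q hbδ)
  have hb2 : (0 : ℝ) < π ^ 2 * c ^ 2 := by positivity
  set K : ℂ := (c : ℂ) * (Real.sqrt π : ℂ) * (-2 * (π : ℂ) * Complex.I * (c : ℂ)) ^ n with hK
  have hFeq : 𝓕 F = fun ξ : ℝ =>
      K * (((Polynomial.X ^ n : Polynomial ℝ).eval ξ * rexp (-(π ^ 2 * c ^ 2) * ξ ^ 2) : ℝ) : ℂ) := by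
    funext ξ
    rw [hF, fourier_hermC_div n hc ξ, hK]
    simp only [Polynomial.eval_pow, Polynomial.eval_X]
    push_cast
    ring
  have Ff_bd : 𝓕 F =O[cocompact ℝ] fun x : ℝ => |x| ^ (-2 : ℝ) := by
    rw [hFeq]
    exact ((Complex.ofRealCLM.isBigO_comp _ _).trans
      (polyGauss_isBigO_rpow (Polynomial.X ^ n) hb2)).const_mul_left K
  have hP := Real.tsum_eq_tsum_fourier_of_rpow_decay hCf one_lt_two f_bd Ff_bd 0
  calc ((∑' j : ℤ, hermiteF n ((j : ℝ) / c) : ℝ) : ℂ)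
      = ∑' j : ℤ, F (0 + (j : ℝ)) := by
        rw [Complex.ofReal_tsum]
        exact tsum_congr fun j => by rw [hF]; norm_num
    _ = ∑' m : ℤ, 𝓕 F m * fourier m ((0 : ℝ) : UnitAddCircle) := hP
    _ = ∑' m : ℤ, 𝓕 F m := by
        simp only [QuotientAddGroup.mk_zero, fourier_eval_zero, mul_one]
    _ = ∑' m : ℤ, K * ((m : ℂ) ^ n * ((Real.exp (-π ^ 2 * (m : ℝ) ^ 2 * δ) : ℝ) : ℂ)) := by
        refine tsum_congr fun m => ?_
        rw [hFeq]
        simp only [Polynomial.eval_pow, Polynomial.eval_X]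
        have harg : -(π ^ 2 * c ^ 2) * (m : ℝ) ^ 2 = -π ^ 2 * (m : ℝ) ^ 2 * δ := by
          rw [hc2]; ring
        rw [harg]
        push_cast
        ring
    _ = K * ∑' m : ℤ, (m : ℂ) ^ n * ((Real.exp (-π ^ 2 * (m : ℝ) ^ 2 * δ) : ℝ) : ℂ) :=
        tsum_mul_left
    _ = (Real.sqrt (π * δ) : ℂ) * (-2 * (π : ℂ) * Complex.I * (c : ℂ)) ^ n *
        ∑' m : ℤ, (m : ℂ) ^ n * ((Real.exp (-π ^ 2 * (m : ℝ) ^ 2 * δ) : ℝ) : ℂ) := by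
        rw [hK, Real.sqrt_mul pi_pos.le, hcdef]
        push_cast
        ring


/-- Poisson summation for Hermite lattice sums, in one dimension and its
two-dimensional consequence. -/
theorem hermite_lattice_sums (δ : ℝ) (hδ : 0 < δ) :
    (∀ n : ℕ, Summable fun j : ℤ => |hermiteF n ((j : ℝ) / Real.sqrt δ)|) ∧
    (∀ n : ℕ, Summable fun m : ℤ =>
        |(m : ℝ) ^ n * Real.exp (-π ^ 2 * (m : ℝ) ^ 2 * δ)|) ∧
    (∀ n : ℕ,
        ((∑' j : ℤ, hermiteF n ((j : ℝ) / Real.sqrt δ) : ℝ) : ℂ) =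
          (Real.sqrt (π * δ) : ℂ) *
            (-2 * (π : ℂ) * Complex.I * (Real.sqrt δ : ℂ)) ^ n *
            ∑' m : ℤ, (m : ℂ) ^ n * (Real.exp (-π ^ 2 * (m : ℝ) ^ 2 * δ) : ℂ)) ∧
    (∀ α : ℕ × ℕ,
        ((∑' j : ℤ × ℤ,
            hermiteF α.1 ((j.1 : ℝ) / Real.sqrt δ) *
              hermiteF α.2 ((j.2 : ℝ) / Real.sqrt δ) : ℝ) : ℂ) =
          ((π * δ : ℝ) : ℂ) *
            (-2 * (π : ℂ) * Complex.I * (Real.sqrt δ : ℂ)) ^ (α.1 + α.2) *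
            (∑' m : ℤ, (m : ℂ) ^ α.1 * (Real.exp (-π ^ 2 * (m : ℝ) ^ 2 * δ) : ℂ)) *
            (∑' n : ℤ, (n : ℂ) ^ α.2 * (Real.exp (-π ^ 2 * (n : ℝ) ^ 2 * δ) : ℂ))) := by
  refine ⟨herm_summable δ hδ, gaussMoment_summable δ hδ, oneD δ hδ, ?_⟩
  intro α
  set A : ℤ → ℝ := fun j => hermiteF α.1 ((j : ℝ) / Real.sqrt δ) with hAdef
  set B : ℤ → ℝ := fun j => hermiteF α.2 ((j : ℝ) / Real.sqrt δ) with hBdef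
  have hA := herm_summable δ hδ α.1
  have hB := herm_summable δ hδ α.2
  have hA' : Summable A := summable_abs_iff.1 hA
  have hB' : Summable B := summable_abs_iff.1 hB
  have hAB : Summable fun p : ℤ × ℤ => A p.1 * B p.2 := by
    have h := hA.mul_of_nonneg hB (fun j => abs_nonneg _) (fun j => abs_nonneg _)
    exact summable_abs_iff.1 (h.congr fun p => (abs_mul _ _).symm)
  have hprod : (∑' p : ℤ × ℤ, A p.1 * B p.2) = (∑' j : ℤ, A j) * ∑' j : ℤ, B j :=
    (Summable.tsum_mul_tsum hA' hB' hAB).symm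
  have hsq : (Real.sqrt (π * δ) : ℂ) * (Real.sqrt (π * δ) : ℂ) = ((π * δ : ℝ) : ℂ) := by
    rw [← Complex.ofReal_mul, Real.mul_self_sqrt (by positivity)]
  calc ((∑' j : ℤ × ℤ, A j.1 * B j.2 : ℝ) : ℂ)
      = ((∑' j : ℤ, A j : ℝ) : ℂ) * ((∑' j : ℤ, B j : ℝ) : ℂ) := by
        rw [hprod, Complex.ofReal_mul]
    _ = ((π * δ : ℝ) : ℂ) *
          (-2 * (π : ℂ) * Complex.I * (Real.sqrt δ : ℂ)) ^ (α.1 + α.2) *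
          (∑' m : ℤ, (m : ℂ) ^ α.1 * (Real.exp (-π ^ 2 * (m : ℝ) ^ 2 * δ) : ℂ)) *
          ∑' n : ℤ, (n : ℂ) ^ α.2 * (Real.exp (-π ^ 2 * (n : ℝ) ^ 2 * δ) : ℂ) := by
        rw [hAdef, hBdef, oneD δ hδ α.1, oneD δ hδ α.2, pow_add, ← hsq]
        ring

end
end
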